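/- Let n ≥ 2 and let m_1, ..., m_n be positive integers such that ∏_{j≠i} m_j ≥ 2 for every i ∈ {1,...,n}. Within the space ℝ^{n·m_1·...·m_n} of n-player games with strategy sets of sizes m_1, ..., m_n (parametrized by their payoff functions), the set of games whose correlated equilibrium polytope has affine dimension exactly m_1·...·m_n − 2 has Lebesgue measure zero. -/

import Mathlib

open scoped BigOperators

section Prelim

variable {S : Type} [Fintype S] [DecidableEq S]

/-- `σ` is a mixed strategy (probability distribution) on the finite set `S`. -/
def IsMixed (σ : S → ℝ) : Prop := (∀ s, 0 ≤ σ s) ∧ ∑ s, σ s = 1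

/-- The Dirac measure `δ_s`. -/
def dirac (s : S) : S → ℝ := fun d => if d = s then 1 else 0

/-- `α_i * σ_i`, the image of the mixed strategy `σ` under the deviation plan `αᵢ`,
where `αᵢ c d` is the probability `αᵢ(d | c)`. -/
def devImage (αᵢ : S → S → ℝ) (σ : S → ℝ) : S → ℝ := fun d => ∑ c, σ c * αᵢ c d

/-- `σ` is `αᵢ`-stationary: `αᵢ * σ = σ`. -/
def IsStationaryMixed (αᵢ : S → S → ℝ) (σ : S → ℝ) : Prop := devImage αᵢ σ = σ

/-- A nonempty `B ⊆ S` is `αᵢ`-absorbing if `supp (αᵢ * c) ⊆ B` for all `c ∈ B`. -/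
def IsAbsorbing (αᵢ : S → S → ℝ) (B : Finset S) : Prop :=
  B.Nonempty ∧ ∀ c ∈ B, ∀ d, 0 < αᵢ c d → d ∈ B

/-- A minimal absorbing set: an absorbing set containing no proper nonempty absorbing subset. -/
def IsMinimalAbsorbing (αᵢ : S → S → ℝ) (B : Finset S) : Prop :=
  IsAbsorbing αᵢ B ∧ ∀ B' ⊆ B, IsAbsorbing αᵢ B' → B' = B

/-- `C_i/α_i`: the set of `αᵢ`-stationary mixed strategies whose support is contained
in some minimal `αᵢ`-absorbing set. -/
def ReducedSet (αᵢ : S → S → ℝ) : Set (S → ℝ) :=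
  {σ | IsMixed σ ∧ IsStationaryMixed αᵢ σ ∧
    ∃ B : Finset S, IsMinimalAbsorbing αᵢ B ∧ ∀ s, σ s ≠ 0 → s ∈ B}

end Prelim

section Games

variable {N : Type} [Fintype N] [DecidableEq N]
  {C : N → Type} [∀ i, Fintype (C i)] [∀ i, DecidableEq (C i)]

/-- Marginal probability of the pure strategy `cᵢ` of player `i` under `μ`. -/
def marginal (μ : (∀ j, C j) → ℝ) (i : N) (cᵢ : C i) : ℝ :=
  ∑ c : ∀ j, C j, if c i = cᵢ then μ c else 0

/-- The incentive sum `∑_{c_{-i}} μ(c_{-i},cᵢ)[U_i(c_{-i},dᵢ) − U_i(c_{-i},cᵢ)]`. -/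
def incentiveSum (U : ∀ i : N, (∀ j, C j) → ℝ) (μ : (∀ j, C j) → ℝ) (i : N) (cᵢ dᵢ : C i) : ℝ :=
  ∑ c : ∀ j, C j, if c i = cᵢ then μ c * (U i (Function.update c i dᵢ) - U i c) else 0

/-- Correlated equilibrium. -/
def IsCorrelatedEq (U : ∀ i : N, (∀ j, C j) → ℝ) (μ : (∀ j, C j) → ℝ) : Prop :=
  (∀ c, 0 ≤ μ c) ∧ (∑ c : ∀ j, C j, μ c) = 1 ∧
    ∀ (i : N) (cᵢ dᵢ : C i), incentiveSum U μ i cᵢ dᵢ ≤ 0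

/-- Multilinear extension: payoff of player `i` under the mixed strategy profile `σ`. -/
def mixedPayoff (U : ∀ i : N, (∀ j, C j) → ℝ) (σ : ∀ j, C j → ℝ) (i : N) : ℝ :=
  ∑ c : ∀ j, C j, (∏ j, σ j (c j)) * U i c

/-- Nash equilibrium. -/
def IsNash (U : ∀ i : N, (∀ j, C j) → ℝ) (σ : ∀ j, C j → ℝ) : Prop :=
  (∀ i, IsMixed (σ i)) ∧
  ∀ (i : N) (dᵢ : C i),
    mixedPayoff U (Function.update σ i (dirac dᵢ)) i ≤ mixedPayoff U σ i

/-- `D(c, α) = ∑_i [U_i(c_{-i}, α_i * c_i) − U_i(c)]`. -/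
def devGain (U : ∀ i : N, (∀ j, C j) → ℝ) (α : ∀ i, C i → C i → ℝ) (c : ∀ j, C j) : ℝ :=
  ∑ i, ((∑ dᵢ, α i (c i) dᵢ * U i (Function.update c i dᵢ)) - U i c)

/-- A dual vector: a profile of deviation plans with `D(c,α) ≥ 0` for all `c`. -/
def IsDualVector (U : ∀ i : N, (∀ j, C j) → ℝ) (α : ∀ i, C i → C i → ℝ) : Prop :=
  (∀ (i : N) (cᵢ : C i), IsMixed (α i cᵢ)) ∧ ∀ c, 0 ≤ devGain U α c

/-- A strong dual vector: `D(c,α) > 0` whenever `c` has probability zero in all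
correlated equilibria. -/
def IsStrong (U : ∀ i : N, (∀ j, C j) → ℝ) (α : ∀ i, C i → C i → ℝ) : Prop :=
  ∀ c : ∀ j, C j, (∀ μ, IsCorrelatedEq U μ → μ c = 0) → 0 < devGain U α c

/-- A full dual vector: `α_i(dᵢ|cᵢ) > 0` whenever `β_i(dᵢ|cᵢ) > 0` for some dual vector `β`. -/
def IsFull (U : ∀ i : N, (∀ j, C j) → ℝ) (α : ∀ i, C i → C i → ℝ) : Prop :=
  ∀ (i : N) (cᵢ dᵢ : C i),
    (∃ β : ∀ i, C i → C i → ℝ, IsDualVector U β ∧ 0 < β i cᵢ dᵢ) → 0 < α i cᵢ dᵢ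

end Games

/-!
The correlated equilibria form a polyhedron `P` cut out by `μ ≥ 0`, `∑ μ = 1` and the incentive
constraints, and `dim P = |C| - rank A₌`, where the rows of `A₌` are the normals of the implicit
equalities (the inequalities that are tight on all of `P`). If `dim P = |C| - 2`, these normals
span a plane that contains the all-ones vector, while all the others (coordinate vectors `δ_c` and
incentive vectors) are orthogonal to every correlated equilibrium, so they lie on one line.
Moving a correlated equilibrium in a mass-preserving direction that decreases one of them must
increase another one, so two of them are negatively proportional. For a player whose payoffs are
algebraically independent over `ℚ` this is impossible: it forces either two equal payoffs or a
vanishing `2 × 2` minor of payoff differences. The algebraically dependent payoff vectors are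
covered by countably many zero sets of nonzero polynomials, a Lebesgue-null set.
-/

open MeasureTheory Matrix Module Filter Topology

theorem volume_eq_zero_of_ae_volume_fin_cons_eq_zero {k : ℕ} {Z : Set (Fin (k + 1) → ℝ)}
    (hZ : MeasurableSet Z) (h : ∀ᵐ s : Fin k → ℝ, volume {y : ℝ | Fin.cons y s ∈ Z} = 0) :
    volume Z = 0 := by
  have e := (volume_preserving_piFinSuccAbove (fun _ : Fin (k + 1) => ℝ) 0).symm
  have hpre : (MeasurableEquiv.piFinSuccAbove (fun _ => ℝ) 0).symm ⁻¹' Z =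
      {q : ℝ × (Fin k → ℝ) | Fin.cons q.1 q.2 ∈ Z} := by
    ext q; simp [Fin.consEquiv]
  rw [← e.measure_preimage_equiv, hpre, Measure.volume_eq_prod, Measure.prod_apply_symm
    (hpre ▸ hZ.preimage (MeasurableEquiv.measurable _))]
  exact (lintegral_congr_ae h).trans lintegral_zero

theorem MvPolynomial.volume_setOf_eval_eq_zero_fin :
    ∀ {k : ℕ} {p : MvPolynomial (Fin k) ℝ}, p ≠ 0 → volume {x | eval x p = 0} = 0
  | 0, p, hp => by
    obtain ⟨a, rfl⟩ := C_surjective (Fin 0) p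
    simp_all
  | k + 1, p, hp => by
    set q := finSuccEquiv ℝ k p
    have hq : q.leadingCoeff ≠ 0 :=
      Polynomial.leadingCoeff_ne_zero.2 ((map_ne_zero_iff _ (finSuccEquiv ℝ k).injective).2 hp)
    refine volume_eq_zero_of_ae_volume_fin_cons_eq_zero
      (measurableSet_eq_fun (continuous_eval p).measurable measurable_const) ?_
    filter_upwards [compl_mem_ae_iff.2 (volume_setOf_eval_eq_zero_fin hq)] with s hs
    have hqs : q.map (eval s) ≠ 0 := fun h => hs <| show eval s (q.coeff q.natDegree) = 0 by
      simpa only [Polynomial.coeff_map, Polynomial.coeff_zero] using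
        congrArg (Polynomial.coeff · q.natDegree) h
    refine measure_mono_null (fun y hy => ?_)
      ((Polynomial.finite_setOfPred_isRoot hqs).measure_zero _)
    simpa [eval_eq_eval_mv_eval'] using hy

theorem volume_setOf_not_algebraicIndependent_fin (k : ℕ) :
    volume {x : Fin k → ℝ | ¬AlgebraicIndependent ℚ x} = 0 := by
  have : Countable (MvPolynomial (Fin k) ℚ) := AddMonoidAlgebra.coeff_injective.countable
  have hmap := MvPolynomial.map_injective (σ := Fin k) _ (algebraMap ℚ ℝ).injective
  refine measure_mono_null (t := ⋃ p : {p : MvPolynomial (Fin k) ℚ // p ≠ 0},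
      {x | MvPolynomial.eval x (MvPolynomial.map (algebraMap ℚ ℝ) p.1) = 0}) ?_
    (measure_iUnion_null fun p => MvPolynomial.volume_setOf_eval_eq_zero_fin
      ((map_ne_zero_iff _ hmap).2 p.2))
  intro x hx
  obtain ⟨p, hp, hp0⟩ : ∃ p, MvPolynomial.aeval x p = 0 ∧ p ≠ 0 := by
    simpa only [Set.mem_ofPred_eq, algebraicIndependent_iff, not_forall, exists_prop] using hx
  exact Set.mem_iUnion.2 ⟨⟨p, hp0⟩, by
    rwa [MvPolynomial.aeval_def, MvPolynomial.eval₂_eq_eval_map] at hp⟩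

theorem volume_setOf_not_algebraicIndependent {ι : Type*} [Fintype ι] :
    volume {x : ι → ℝ | ¬AlgebraicIndependent ℚ x} = 0 := by
  let e := Fintype.equivFin ι
  have he := volume_preserving_arrowCongr' e (MeasurableEquiv.refl ℝ) (.id volume)
  rw [← volume_setOf_not_algebraicIndependent_fin (Fintype.card ι), ← he.measure_preimage_equiv]
  congr 1
  ext x
  simp only [MeasurableEquiv.arrowCongr', Equiv.arrowCongr', Equiv.arrowCongr,
    MeasurableEquiv.refl]
  exact not_congr (algebraicIndependent_equiv e.symm).symm

section Polyhedron

variable {α ι : Type*} [Fintype α] (a : ι → α → ℝ) (b : ι → ℝ)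

def polyhedron : Set (α → ℝ) := {x | ∀ k, a k ⬝ᵥ x ≤ b k}

def IsImplicitEquality (k : ι) : Prop := ∀ x ∈ polyhedron a b, a k ⬝ᵥ x = b k

def implicitMatrix : Matrix {k // IsImplicitEquality a b k} α ℝ := fun k => a k

variable {a b}

theorem exists_mem_polyhedron_forall_lt [Finite ι] (hP : (polyhedron a b).Nonempty) :
    ∃ x₀ ∈ polyhedron a b, ∀ k, ¬IsImplicitEquality a b k → a k ⬝ᵥ x₀ < b k := by
  have := Fintype.ofFinite ι
  suffices ∀ s : Finset ι, ∃ x₀ ∈ polyhedron a b, ∀ k ∈ s, ¬IsImplicitEquality a b k →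
      a k ⬝ᵥ x₀ < b k by
    simpa using this Finset.univ
  intro s
  induction s using Finset.cons_induction with
  | empty => exact hP.imp fun x hx => ⟨hx, by simp⟩
  | cons k s _ ih =>
    obtain ⟨y, hy, hys⟩ := ih
    by_cases hk : IsImplicitEquality a b k
    · exact ⟨y, hy, by simpa [hk] using hys⟩
    obtain ⟨z, hz, hzk⟩ : ∃ z ∈ polyhedron a b, a k ⬝ᵥ z < b k := by
      simp only [IsImplicitEquality, not_forall] at hk
      obtain ⟨z, hz, hne⟩ := hk
      exact ⟨z, hz, (hz k).lt_of_ne hne⟩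
    -- the midpoint is strict wherever one of the two endpoints is
    have hmid : ∀ l, a l ⬝ᵥ ((1 / 2 : ℝ) • (y + z)) = (a l ⬝ᵥ y + a l ⬝ᵥ z) / 2 := fun l => by
      rw [dotProduct_smul, dotProduct_add, smul_eq_mul]; ring
    refine ⟨(1 / 2 : ℝ) • (y + z), fun l => ?_, ?_⟩
    · linarith [hmid l, hy l, hz l]
    · simp only [Finset.mem_cons, forall_eq_or_imp]
      exact ⟨fun _ => by linarith [hmid k, hy k], fun l hl hl' => by
        linarith [hmid l, hys l hl hl', hz l]⟩

theorem exists_pos_add_smul_mem_polyhedron [Finite ι] {x₀ v : α → ℝ}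
    (hx₀ : x₀ ∈ polyhedron a b) (hlt : ∀ k, ¬IsImplicitEquality a b k → a k ⬝ᵥ x₀ < b k)
    (hv : ∀ k, IsImplicitEquality a b k → a k ⬝ᵥ v ≤ 0) :
    ∃ t : ℝ, 0 < t ∧ x₀ + t • v ∈ polyhedron a b := by
  have hmem : ∀ᶠ t in 𝓝[>] (0 : ℝ), x₀ + t • v ∈ polyhedron a b := by
    refine eventually_all.2 fun k => ?_
    simp only [dotProduct_add, dotProduct_smul, smul_eq_mul]
    by_cases hk : IsImplicitEquality a b k
    · filter_upwards [self_mem_nhdsWithin] with t (ht : 0 < t)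
      nlinarith [hk x₀ hx₀, hv k hk]
    · have hc : Continuous fun t : ℝ => a k ⬝ᵥ x₀ + t * a k ⬝ᵥ v := by fun_prop
      have hlt' : ∀ᶠ t in 𝓝 (0 : ℝ), a k ⬝ᵥ x₀ + t * a k ⬝ᵥ v < b k :=
        hc.continuousAt.eventually_lt continuousAt_const (by simpa using hlt k hk)
      filter_upwards [nhdsWithin_le_nhds hlt'] with t ht using ht.le
  exact (hmem.and self_mem_nhdsWithin).exists.imp fun _ ht => ⟨ht.2, ht.1⟩

theorem IsImplicitEquality.dotProduct_eq_zero [Finite ι] (hP : (polyhedron a b).Nonempty)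
    {k : ι} (hk : IsImplicitEquality a b k) {v : α → ℝ}
    (hv : ∀ l, IsImplicitEquality a b l → a l ⬝ᵥ v ≤ 0) : a k ⬝ᵥ v = 0 := by
  obtain ⟨x₀, hx₀, hlt⟩ := exists_mem_polyhedron_forall_lt hP
  obtain ⟨t, ht, hxt⟩ := exists_pos_add_smul_mem_polyhedron hx₀ hlt hv
  have := hk _ hxt
  rw [dotProduct_add, dotProduct_smul, hk x₀ hx₀, smul_eq_mul] at this
  exact (mul_eq_zero.1 (by linarith)).resolve_left ht.ne'

theorem vectorSpan_polyhedron [Finite ι] (hP : (polyhedron a b).Nonempty) :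
    vectorSpan ℝ (polyhedron a b) = LinearMap.ker (implicitMatrix a b).mulVecLin := by
  apply le_antisymm
  · refine Submodule.span_le.2 ?_
    rintro _ ⟨x, hx, y, hy, rfl⟩
    ext ⟨k, hk⟩
    simp [implicitMatrix, mulVec, dotProduct_sub, hk x hx, hk y hy]
  · intro v hv
    have hv' : ∀ k, IsImplicitEquality a b k → a k ⬝ᵥ v = 0 := fun k hk =>
      congrFun (LinearMap.mem_ker.1 hv) ⟨k, hk⟩
    obtain ⟨x₀, hx₀, hlt⟩ := exists_mem_polyhedron_forall_lt hP
    obtain ⟨t, ht, hxt⟩ := exists_pos_add_smul_mem_polyhedron hx₀ hlt fun k hk => (hv' k hk).le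
    have := Submodule.smul_mem _ t⁻¹ (vsub_mem_vectorSpan ℝ hxt hx₀)
    rwa [vsub_eq_sub, add_sub_cancel_left, smul_smul, inv_mul_cancel₀ ht.ne', one_smul] at this

theorem rank_implicitMatrix_add_finrank_vectorSpan [Finite ι] (hP : (polyhedron a b).Nonempty) :
    (implicitMatrix a b).rank + finrank ℝ (vectorSpan ℝ (polyhedron a b)) = Fintype.card α := by
  rw [vectorSpan_polyhedron hP, rank, LinearMap.finrank_range_add_finrank_ker,
    finrank_fintype_fun_eq_card]

end Polyhedron

theorem exists_eq_smul_of_finrank_eq_two {K V : Type*} [Field K] [AddCommGroup V] [Module K V]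
    {Φ : Submodule K V} (hΦ : finrank K Φ = 2) (f : V →ₗ[K] K) {e u w : V}
    (he : e ∈ Φ) (hfe : f e ≠ 0) (hu : u ∈ Φ) (hu0 : u ≠ 0) (hfu : f u = 0)
    (hw : w ∈ Φ) (hfw : f w = 0) : ∃ r : K, w = r • u := by
  have : FiniteDimensional K Φ := Module.finite_of_finrank_eq_succ hΦ
  have hind : LinearIndependent K ![e, u] := LinearIndependent.pair_iff.2 fun s t hst => by
    have hs : s = 0 := by simpa [hfu, hfe] using congrArg f hst
    subst hs
    exact ⟨rfl, (smul_eq_zero.1 (by simpa using hst)).resolve_right hu0⟩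
  have hspan : Submodule.span K {e, u} = Φ := by
    refine Submodule.eq_of_le_of_finrank_eq (Submodule.span_le.2 ?_) ?_
    · simp [Set.insert_subset_iff, he, hu]
    · rw [← Matrix.range_cons_cons_empty e u ![], finrank_span_eq_card hind, hΦ, Fintype.card_fin]
  obtain ⟨s, r, rfl⟩ := Submodule.mem_span_pair.1 (hspan ▸ hw)
  have hs : s = 0 := by simpa [hfu, hfe] using hfw
  exact ⟨r, by simp [hs]⟩

theorem AlgebraicIndependent.sub_mul_sub_ne {ι : Type*} {x : ι → ℝ}
    (hx : AlgebraicIndependent ℚ x) {a b c d e f : ι} (ha : a ∉ ({b, d, e, f} : Set ι))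
    (hc : c ∉ ({b, d, e, f} : Set ι)) :
    (x a - x b) * (x c - x d) ≠ (x e - x b) * (x f - x d) := by
  classical
  open MvPolynomial in
  set p : MvPolynomial ι ℚ := (X a - X b) * (X c - X d) - (X e - X b) * (X f - X d)
  have hp : p ≠ 0 := fun h => by
    simp only [Set.mem_insert_iff, Set.mem_singleton_iff, not_or] at ha hc
    have := congrArg (MvPolynomial.eval fun z => if z = a ∨ z = c then (1 : ℚ) else 0) h
    simp [p, Ne.symm ha.1, Ne.symm ha.2.1, Ne.symm ha.2.2.1, Ne.symm ha.2.2.2,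
      Ne.symm hc.1, Ne.symm hc.2.1, Ne.symm hc.2.2.1, Ne.symm hc.2.2.2] at this
  intro h
  exact hp (hx.eq_zero_of_aeval_eq_zero p (by simp [p, h]))

theorem four_le_card_pi {N : Type} [Fintype N] [DecidableEq N] [Nonempty N] {C : N → Type}
    [∀ i, Fintype (C i)] [∀ i, Nonempty (C i)]
    (hb : ∀ i, ∃ j ≠ i, Nontrivial (C j)) : 4 ≤ Fintype.card (∀ j, C j) := by
  obtain ⟨j₀, -, h₀⟩ := hb (Classical.arbitrary N)
  obtain ⟨j₁, hne, h₁⟩ := hb j₀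
  calc 4 = 2 * 2 := rfl
    _ ≤ ∏ j ∈ {j₀, j₁}, Fintype.card (C j) := by
      rw [Finset.prod_pair hne.symm]
      exact Nat.mul_le_mul Fintype.one_lt_card Fintype.one_lt_card
    _ ≤ ∏ j, Fintype.card (C j) :=
      Finset.prod_le_prod_of_subset_of_one_le' (Finset.subset_univ _) fun j _ _ => Fintype.card_pos
    _ = Fintype.card (∀ j, C j) := Fintype.card_pi.symm

section CorrelatedEquilibrium

variable {N : Type} [DecidableEq N] {C : N → Type} [∀ i, DecidableEq (C i)]
  {U : N → (∀ j, C j) → ℝ}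

def incentiveVector (U : N → (∀ j, C j) → ℝ) (i : N) (cᵢ dᵢ : C i) : (∀ j, C j) → ℝ :=
  fun c => if c i = cᵢ then U i (Function.update c i dᵢ) - U i c else 0

theorem incentiveVector_self (i : N) (cᵢ : C i) : incentiveVector U i cᵢ cᵢ = 0 := by
  ext c
  simp only [incentiveVector, Pi.zero_apply, ite_eq_right_iff]
  rintro rfl
  rw [Function.update_eq_self, sub_self]

theorem incentiveVector_apply_of_ne {i : N} {cᵢ dᵢ : C i} {c : ∀ j, C j} (h : c i ≠ cᵢ) :
    incentiveVector U i cᵢ dᵢ c = 0 :=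
  if_neg h

theorem incentiveVector_apply_ne_zero {i : N} (hU : Function.Injective (U i)) {cᵢ dᵢ : C i}
    {c : ∀ j, C j} (hc : c i = cᵢ) (hd : dᵢ ≠ cᵢ) : incentiveVector U i cᵢ dᵢ c ≠ 0 := by
  rw [incentiveVector, if_pos hc, sub_ne_zero, hU.ne_iff]
  exact fun h => hd (by simpa [hc] using congrFun h i)

theorem incentiveVector_ne_neg_smul {i i' : N} (hU : AlgebraicIndependent ℚ (U i))
    (hj : ∃ j ≠ i, Nontrivial (C j)) {cᵢ dᵢ : C i} {cᵢ' dᵢ' : C i'}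
    (hu : incentiveVector U i cᵢ dᵢ ≠ 0) {r : ℝ} (hr : r < 0) :
    incentiveVector U i' cᵢ' dᵢ' ≠ r • incentiveVector U i cᵢ dᵢ := by
  intro h
  obtain ⟨x, hx⟩ := Function.ne_iff.1 hu
  have hxi : x i = cᵢ := by_contra fun h' => hx (incentiveVector_apply_of_ne h')
  have hdi : dᵢ ≠ cᵢ := by rintro rfl; simp [incentiveVector_self] at hu
  have hdi' : dᵢ' ≠ cᵢ' := by
    rintro rfl
    rw [incentiveVector_self, eq_comm, smul_eq_zero] at h
    exact h.elim hr.ne hu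
  have hw : ∀ y, incentiveVector U i' cᵢ' dᵢ' y = r * incentiveVector U i cᵢ dᵢ y := fun y => by
    simp [h]
  by_cases hii : i = i'
  · subst hii
    by_cases hcc : cᵢ = cᵢ'
    · subst hcc
      have hdd : dᵢ ≠ dᵢ' := by
        rintro rfl
        have := hw x
        have : (1 - r) * incentiveVector U i cᵢ dᵢ x = 0 := by linarith
        exact hx ((mul_eq_zero.1 this).resolve_left (by linarith))
      obtain ⟨j, hji, hj⟩ := hj
      obtain ⟨t, ht⟩ := exists_ne (x j)
      set y := Function.update x j t
      have hyi : y i = cᵢ := by simp [y, Ne.symm hji, hxi]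
      -- proportional incentive vectors have a vanishing `2 × 2` minor at the profiles `x`, `y`
      have hminor :
          (U i (Function.update x i dᵢ') - U i x) * (U i (Function.update y i dᵢ) - U i y) =
            (U i (Function.update x i dᵢ) - U i x) * (U i (Function.update y i dᵢ') - U i y) := by
        have h1 := hw x
        have h2 := hw y
        simp only [incentiveVector, if_pos hxi, if_pos hyi] at h1 h2
        rw [h1, h2]; ring
      refine hU.sub_mul_sub_ne ?_ ?_ hminor <;>
        simp only [Set.mem_insert_iff, Set.mem_singleton_iff, not_or] <;>
        refine ⟨fun h => ?_, fun h => ?_, fun h => ?_, fun h => ?_⟩ <;>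
        have hi := congrFun h i <;> have hj := congrFun h j <;> simp_all [y, Ne.symm hji]
    · have := hw x
      rw [incentiveVector_apply_of_ne (by rwa [hxi])] at this
      exact hx ((mul_eq_zero.1 this.symm).resolve_left hr.ne)
  · set z := Function.update x i' dᵢ'
    have := hw z
    rw [incentiveVector_apply_of_ne (by simpa [z] using hdi')] at this
    exact incentiveVector_apply_ne_zero hU.injective (c := z) (by simp [z, hii, hxi]) hdi
      ((mul_eq_zero.1 this.symm).resolve_left hr.ne)

variable [Fintype N]

theorem incentiveVector_ne_smul_single {i : N} (hU : Function.Injective (U i))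
    (hj : ∃ j ≠ i, Nontrivial (C j)) (cᵢ dᵢ : C i) {s : ℝ} (hs : s ≠ 0) (c : ∀ j, C j) :
    incentiveVector U i cᵢ dᵢ ≠ s • Pi.single c 1 := by
  intro h
  have hc : incentiveVector U i cᵢ dᵢ c ≠ 0 := by simp [h, hs]
  have hci : c i = cᵢ := by_contra fun h' => hc (incentiveVector_apply_of_ne h')
  have hdi : dᵢ ≠ cᵢ := by rintro rfl; simp [incentiveVector_self] at hc
  obtain ⟨j, hji, hj⟩ := hj
  obtain ⟨t, ht⟩ := exists_ne (c j)
  have hne : Function.update c j t ≠ c := fun h' => ht (by simpa using congrFun h' j)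
  apply incentiveVector_apply_ne_zero hU (c := Function.update c j t) (by simp [hji.symm, hci]) hdi
  simp [h, hne]

variable (C) in
/-- Indices of the inequalities `-μ c ≤ 0`, `∑ μ ≤ 1`, `-∑ μ ≤ -1` and `incentiveSum ≤ 0` that
cut out the correlated equilibria. -/
abbrev CEConstraint : Type := (∀ j, C j) ⊕ Bool ⊕ (Σ i, C i × C i)

def ceNormal (U : N → (∀ j, C j) → ℝ) : CEConstraint C → (∀ j, C j) → ℝ
  | .inl c => -Pi.single c 1
  | .inr (.inl true) => 1
  | .inr (.inl false) => -1
  | .inr (.inr ⟨i, cᵢ, dᵢ⟩) => incentiveVector U i cᵢ dᵢ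

def ceBound : CEConstraint C → ℝ
  | .inr (.inl true) => 1
  | .inr (.inl false) => -1
  | _ => 0

theorem ceNormal_ne_neg_smul (hb : ∀ i, ∃ j ≠ i, Nontrivial (C j))
    (hU : ∀ i, AlgebraicIndependent ℚ (U i)) {k l : CEConstraint C} (hk : ceBound k = 0)
    (hl : ceBound l = 0) (hk0 : ceNormal U k ≠ 0) {r : ℝ} (hr : r < 0) :
    ceNormal U l ≠ r • ceNormal U k := by
  intro h
  rcases k with c | (_ | _) | ⟨i, cᵢ, dᵢ⟩ <;> rcases l with c' | (_ | _) | ⟨i', cᵢ', dᵢ'⟩ <;>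
    simp [ceBound] at hk hl <;> simp only [ceNormal] at hk0 h
  · have := congrFun h c'
    simp only [Pi.neg_apply, Pi.single_eq_same, Pi.smul_apply, smul_eq_mul] at this
    have : 0 ≤ Pi.single (M := fun _ => ℝ) c 1 c' := by
      rw [Pi.single_apply]; split_ifs <;> norm_num
    nlinarith
  · exact incentiveVector_ne_smul_single (hU i').injective (hb i') cᵢ' dᵢ'
      (neg_ne_zero.2 hr.ne) c (by rw [h, smul_neg, neg_smul])
  · refine incentiveVector_ne_smul_single (hU i).injective (hb i) cᵢ dᵢ
      (neg_ne_zero.2 (inv_ne_zero hr.ne)) c' ?_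
    rw [neg_smul, ← smul_neg, h, inv_smul_smul₀ hr.ne]
  · exact incentiveVector_ne_neg_smul (hU i) (hb i) hk0 hr h

variable [∀ i, Fintype (C i)]

theorem incentiveSum_eq_dotProduct (μ : (∀ j, C j) → ℝ) (i : N) (cᵢ dᵢ : C i) :
    incentiveSum U μ i cᵢ dᵢ = incentiveVector U i cᵢ dᵢ ⬝ᵥ μ :=
  Finset.sum_congr rfl fun c _ => by simp only [incentiveVector, mul_ite, mul_zero, mul_comm]

theorem isCorrelatedEq_iff_mem_polyhedron {μ : (∀ j, C j) → ℝ} :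
    IsCorrelatedEq U μ ↔ μ ∈ polyhedron (ceNormal U) ceBound := by
  simp only [IsCorrelatedEq, polyhedron, Set.mem_ofPred_eq, Sum.forall, Bool.forall_bool,
    Sigma.forall, Prod.forall, ceNormal, ceBound, neg_dotProduct, single_dotProduct,
    one_dotProduct, incentiveSum_eq_dotProduct]
  constructor
  · rintro ⟨hpos, hsum, hinc⟩
    exact ⟨fun c => by simpa using hpos c, ⟨by linarith, by linarith⟩, hinc⟩
  · rintro ⟨hpos, ⟨hle, hge⟩, hinc⟩
    exact ⟨fun c => by simpa using hpos c, by linarith, hinc⟩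

theorem isImplicitEquality_ceNormal_mass :
    IsImplicitEquality (ceNormal U) ceBound (.inr (.inl true)) := fun μ hμ => by
  have h1 := hμ (.inr (.inl true))
  have h2 := hμ (.inr (.inl false))
  simp only [ceNormal, ceBound, neg_dotProduct] at h1 h2 ⊢
  linarith

theorem exists_isImplicitEquality_ceNormal_ne_zero
    (hrank : (implicitMatrix (ceNormal U) ceBound).rank = 2) :
    ∃ k, IsImplicitEquality (ceNormal U) ceBound k ∧ ceBound k = 0 ∧ ceNormal U k ≠ 0 := by
  by_contra! h
  have hle : Submodule.span ℝ (Set.range (implicitMatrix (ceNormal U) ceBound).row) ≤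
      Submodule.span ℝ {1} := by
    refine Submodule.span_le.2 ?_
    rintro _ ⟨⟨k, hk⟩, rfl⟩
    change ceNormal U k ∈ _
    rcases k with c | (_ | _) | q
    · simp [h _ hk rfl]
    · exact Submodule.neg_mem _ (Submodule.mem_span_singleton_self _)
    · exact Submodule.mem_span_singleton_self _
    · simp [h _ hk rfl]
  have := (Submodule.finrank_mono hle).trans (finrank_span_le_card {1})
  rw [← rank_eq_finrank_span_row, hrank] at this
  simp at this

theorem exists_ceNormal_eq_neg_smul (hP : (polyhedron (ceNormal U) ceBound).Nonempty)
    (hrank : (implicitMatrix (ceNormal U) ceBound).rank = 2) :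
    ∃ k l, ceBound k = 0 ∧ ceBound l = 0 ∧ ceNormal U k ≠ 0 ∧
      ∃ r : ℝ, r < 0 ∧ ceNormal U l = r • ceNormal U k := by
  obtain ⟨k, hk, hk0, hak⟩ := exists_isImplicitEquality_ceNormal_ne_zero hrank
  set a := ceNormal U
  set Φ := Submodule.span ℝ (Set.range (implicitMatrix a ceBound).row)
  have hΦ : finrank ℝ Φ = 2 := by rw [← rank_eq_finrank_span_row, hrank]
  have hmem : ∀ k, IsImplicitEquality a ceBound k → a k ∈ Φ := fun k hk =>
    Submodule.subset_span ⟨⟨k, hk⟩, rfl⟩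
  obtain ⟨μ₀, hμ₀⟩ := hP
  let f := dotProductEquiv ℝ (∀ j, C j) μ₀
  have hf : ∀ k, IsImplicitEquality a ceBound k → ceBound k = 0 → f (a k) = 0 := fun k hk hk0 =>
    by simp [f, dotProduct_comm μ₀, hk μ₀ hμ₀, hk0]
  have hmass : IsImplicitEquality a ceBound (.inr (.inl true)) := isImplicitEquality_ceNormal_mass
  have hf1 : f (a (.inr (.inl true))) ≠ 0 := by
    simp [f, dotProduct_comm μ₀, hmass μ₀ hμ₀, ceBound]
  -- along `v` the constraint `k` decreases while the total mass is preserved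
  obtain ⟨x, hx⟩ := Function.ne_iff.1 hak
  set v : (∀ j, C j) → ℝ := (-a k x) • (Pi.single x 1 - μ₀)
  have hkv : a k ⬝ᵥ v < 0 := by
    have : a k ⬝ᵥ μ₀ = 0 := by simpa [hk0] using hk μ₀ hμ₀
    rw [dotProduct_smul, dotProduct_sub, dotProduct_single, this, smul_eq_mul]
    nlinarith [mul_self_pos.2 hx]
  obtain ⟨l, hl, hlv⟩ : ∃ l, IsImplicitEquality a ceBound l ∧ 0 < a l ⬝ᵥ v := by
    by_contra! h
    exact hkv.ne (hk.dotProduct_eq_zero ⟨μ₀, hμ₀⟩ h)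
  have hl0 : ceBound l = 0 := by
    have hsum : (1 : (∀ j, C j) → ℝ) ⬝ᵥ v = 0 := by
      simp [v, dotProduct_sub, one_dotProduct, (isCorrelatedEq_iff_mem_polyhedron.2 hμ₀).2.1]
    rcases l with c | (_ | _) | q
    all_goals simp_all [a, ceNormal, ceBound]
  obtain ⟨r, hr⟩ := exists_eq_smul_of_finrank_eq_two hΦ f (hmem _ hmass) hf1 (hmem k hk) hak
    (hf k hk hk0) (hmem l hl) (hf l hl hl0)
  refine ⟨k, l, hk0, hl0, hak, r, ?_, hr⟩
  rw [hr, smul_dotProduct, smul_eq_mul] at hlv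
  nlinarith

theorem finrank_vectorSpan_correlatedEq_ne [Nonempty N] [∀ i, Nonempty (C i)]
    (hb : ∀ i, ∃ j ≠ i, Nontrivial (C j))
    (hU : ∀ i, AlgebraicIndependent ℚ (U i)) :
    finrank ℝ (vectorSpan ℝ {μ | IsCorrelatedEq U μ}) ≠ Fintype.card (∀ j, C j) - 2 := by
  intro hdim
  have hcard := four_le_card_pi hb
  have hCE : {μ | IsCorrelatedEq U μ} = polyhedron (ceNormal U) ceBound :=
    Set.ext fun μ => isCorrelatedEq_iff_mem_polyhedron
  rw [hCE] at hdim
  have hP : (polyhedron (ceNormal U) ceBound).Nonempty := by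
    by_contra hP
    rw [Set.not_nonempty_iff_eq_empty.1 hP, vectorSpan_empty, finrank_bot] at hdim
    omega
  have hrank := rank_implicitMatrix_add_finrank_vectorSpan hP
  obtain ⟨k, l, hk, hl, hk0, r, hr, hkl⟩ := exists_ceNormal_eq_neg_smul hP (by omega)
  exact ceNormal_ne_neg_smul hb hU hk hl hk0 hr hkl

end CorrelatedEquilibrium

/-- In a generic finite game in which at least two players have at least two pure strategies
(in the aggregate sense `∏_{j≠i} m_j ≥ 2` for all `i`), the correlated equilibrium polytope
does not have affine dimension `|C| - 2`: the set of such games has Lebesgue measure zero. -/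
theorem corrEq_polytope_dimension_not_card_sub_two
    (n : ℕ) (hn : 2 ≤ n) (m : Fin n → ℕ) (hm : ∀ i, 0 < m i)
    (hprod : ∀ i : Fin n, 2 ≤ ∏ j ∈ Finset.univ.erase i, m j) :
    MeasureTheory.volume
      {U : ∀ _ : Fin n, (∀ j : Fin n, Fin (m j)) → ℝ |
        Module.finrank ℝ
            ↥(vectorSpan ℝ {μ : (∀ j : Fin n, Fin (m j)) → ℝ | IsCorrelatedEq U μ}) =
          (∏ j, m j) - 2} = 0 := by
  have : Nonempty (Fin n) := ⟨⟨0, by omega⟩⟩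
  have : ∀ j, Nonempty (Fin (m j)) := fun j => ⟨⟨0, hm j⟩⟩
  have hb : ∀ i, ∃ j ≠ i, Nontrivial (Fin (m j)) := fun i => by
    by_contra! h
    have : ∏ j ∈ Finset.univ.erase i, m j ≤ 1 := Finset.prod_le_one (fun _ _ => Nat.zero_le _)
      fun j hj => Fin.subsingleton_iff_le_one.1 (h j (Finset.ne_of_mem_erase hj))
    linarith [hprod i]
  refine measure_mono_null (fun U hU => ?_) (measure_iUnion_null fun i =>
    Measure.pi_eval_preimage_null _ (i := i)
      (volume_setOf_not_algebraicIndependent (ι := ∀ j, Fin (m j))))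
  simp only [Set.mem_iUnion, Set.mem_preimage, Function.eval, Set.mem_ofPred_eq]
  by_contra! hU'
  exact finrank_vectorSpan_correlatedEq_ne hb hU' (by simpa [Fintype.card_pi] using hU)
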